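/- arXiv:1409.2563 — 2 statements merged into one kernel-verified Lean document; each statement's English description precedes it below -/
import Mathlib

section
/- In a history graph, if a geodesic between two vertices goes up a vertical edge, traverses a horizontal path in level n, and then goes down a vertical edge, it can be strictly shortened; hence in any geodesic all downward vertical edges occur before all upward vertical edges. -/
/-!
Let `π` send every vertex to its parent (and the origin to itself). A down edge `x → y` has
`π x = y`, and since `π` is 1-Lipschitz on levels it maps a horizontal path to a path that is
no longer. So a path `a ↑ c ~~~ d ↓ b` (up, horizontal, down) yields the path `π c ~~~ π d`
from `a = π c` to `b = π d`, shorter by two: a geodesic never goes up and later down.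
-/

namespace HistoryGraph

open SimpleGraph

variable {α : Type*} {G : SimpleGraph α} {lv : α → ℕ} {π : α → α}

structure IsParentMap (G : SimpleGraph α) (lv : α → ℕ) (π : α → α) : Prop where
  level_adj : ∀ ⦃x y⦄, G.Adj x y → lv x = lv y ∨ lv x + 1 = lv y ∨ lv y + 1 = lv x
  eq_of_adj_of_succ_level_eq : ∀ ⦃x y⦄, G.Adj x y → lv y + 1 = lv x → π x = y
  eq_or_adj_of_adj_of_level_eq : ∀ ⦃x y⦄, G.Adj x y → lv x = lv y → π x = π y ∨ G.Adj (π x) (π y)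

def IsUp (lv : α → ℕ) (d : G.Dart) : Prop := lv d.fst + 1 = lv d.snd

def IsDown (lv : α → ℕ) (d : G.Dart) : Prop := lv d.snd + 1 = lv d.fst

def NoUpBeforeDown (lv : α → ℕ) (l : List G.Dart) : Prop :=
  l.Pairwise fun d e => ¬(IsUp lv d ∧ IsDown lv e)

theorem IsParentMap.exists_walk_length_lt (hπ : IsParentMap G lv π) {x y : α} (p : G.Walk x y)
    (hdown : ∃ e ∈ p.darts, IsDown lv e) (hp : NoUpBeforeDown lv p.darts) :
    ∃ q : G.Walk (π x) y, q.length < p.length := by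
  induction p with
  | nil => simp at hdown
  | @cons x c y h p ih =>
    by_cases hxc : lv c + 1 = lv x
    · exact ⟨p.copy (hπ.eq_of_adj_of_succ_level_eq h hxc).symm rfl, by simp⟩
    obtain ⟨e, he, he_down⟩ := hdown
    obtain ⟨hfirst, hp⟩ := List.pairwise_cons.mp hp
    have he : e ∈ p.darts := by
      rcases List.mem_cons.mp he with rfl | he
      · exact absurd he_down hxc
      · exact he
    have hxc_level : lv x = lv c := by
      rcases hπ.level_adj h with hlv | hup | hdn
      · exact hlv
      · exact absurd ⟨hup, he_down⟩ (hfirst e he)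
      · exact absurd hdn hxc
    obtain ⟨q, hq⟩ := ih ⟨e, he, he_down⟩ hp
    rcases hπ.eq_or_adj_of_adj_of_level_eq h hxc_level with hπxc | hπxc
    · exact ⟨q.copy hπxc.symm rfl, by simp; omega⟩
    · exact ⟨.cons hπxc q, by simp; omega⟩

theorem IsParentMap.noUpBeforeDown_darts (hπ : IsParentMap G lv π) {a b : α} (w : G.Walk a b)
    (hw : ∀ q : G.Walk a b, w.length ≤ q.length) : NoUpBeforeDown lv w.darts := by
  induction w with
  | nil => exact List.Pairwise.nil
  | @cons a c b h w ih =>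
    have hw_tail : ∀ q : G.Walk c b, w.length ≤ q.length := fun q => by
      simpa using hw (.cons h q)
    refine List.pairwise_cons.mpr ⟨?_, ih hw_tail⟩
    rintro e he ⟨hup, hdown⟩
    obtain ⟨q, hq⟩ := hπ.exists_walk_length_lt w ⟨e, he, hdown⟩ (ih hw_tail)
    have hπc : π c = a := hπ.eq_of_adj_of_succ_level_eq h.symm hup
    have := hw (q.copy hπc rfl)
    simp only [Walk.length_cons, Walk.length_copy] at this
    omega

variable {V : ℕ → Type*}

def parent (f : ∀ k : ℕ, V (k + 1) → V k) : (Unit ⊕ (Σ n : ℕ, V n)) → (Unit ⊕ (Σ n : ℕ, V n))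
  | .inl _ => .inl ()
  | .inr ⟨0, _⟩ => .inl ()
  | .inr ⟨k + 1, v⟩ => .inr ⟨k, f k v⟩

def level : (Unit ⊕ (Σ n : ℕ, V n)) → ℕ := Sum.elim (fun _ => 0) (fun p => p.1 + 1)

theorem isParentMap_parent {G : SimpleGraph (Unit ⊕ (Σ n : ℕ, V n))}
    (f : ∀ k : ℕ, V (k + 1) → V k)
    (hadj : ∀ a b, G.Adj a b → level a = level b ∨ level a + 1 = level b ∨ level b + 1 = level a)
    (hvert : ∀ (k : ℕ) (v : V (k + 1)) (u : V k),
      G.Adj (Sum.inr ⟨k + 1, v⟩) (Sum.inr ⟨k, u⟩) ↔ u = f k v)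
    (hlip : ∀ (k : ℕ) (u v : V (k + 1)),
      G.Adj (Sum.inr ⟨k + 1, u⟩) (Sum.inr ⟨k + 1, v⟩) →
        f k u = f k v ∨ G.Adj (Sum.inr ⟨k, f k u⟩) (Sum.inr ⟨k, f k v⟩)) :
    IsParentMap G level (parent f) where
  level_adj := hadj
  eq_of_adj_of_succ_level_eq := by
    rintro (_ | ⟨m, v⟩) (_ | ⟨k, u⟩) hxy hlv <;> simp [level] at hlv
    · subst hlv; rfl
    · subst hlv; simp [parent, (hvert k v u).mp hxy]
  eq_or_adj_of_adj_of_level_eq := by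
    rintro (_ | ⟨m, v⟩) (_ | ⟨k, u⟩) hxy hlv <;> simp [level] at hlv
    · exact .inl rfl
    · subst hlv
      cases m with
      | zero => exact .inl rfl
      | succ n => simpa [parent] using hlip n v u hxy

end HistoryGraph

open HistoryGraph in
theorem history_graph_geodesic_down_before_up_general (V : ℕ → Type*)
    (G : SimpleGraph (Unit ⊕ (Σ n : ℕ, V n)))
    (lvl : (Unit ⊕ (Σ n : ℕ, V n)) → ℕ)
    (hlvl : lvl = Sum.elim (fun _ => 0) (fun p => p.1 + 1))
    (hadj : ∀ a b, G.Adj a b → lvl a = lvl b ∨ lvl a + 1 = lvl b ∨ lvl b + 1 = lvl a)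
    (f : ∀ k : ℕ, V (k + 1) → V k)
    (hvert : ∀ (k : ℕ) (v : V (k + 1)) (u : V k),
      G.Adj (Sum.inr ⟨k + 1, v⟩) (Sum.inr ⟨k, u⟩) ↔ u = f k v)
    (hlip : ∀ (k : ℕ) (u v : V (k + 1)),
      G.Adj (Sum.inr ⟨k + 1, u⟩) (Sum.inr ⟨k + 1, v⟩) →
        f k u = f k v ∨ G.Adj (Sum.inr ⟨k, f k u⟩) (Sum.inr ⟨k, f k v⟩))
    {a b : Unit ⊕ (Σ n : ℕ, V n)} (w : G.Walk a b)
    (hgeo : w.length = G.dist a b) :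
    ∀ i j : ℕ, i < j →
      ∀ di dj : G.Dart, w.darts[i]? = some di → w.darts[j]? = some dj →
        ¬(lvl di.toProd.1 + 1 = lvl di.toProd.2 ∧ lvl dj.toProd.2 + 1 = lvl dj.toProd.1) := by
  subst hlvl
  have hw : NoUpBeforeDown level w.darts := (isParentMap_parent f hadj hvert hlip).noUpBeforeDown_darts
    w fun q => hgeo ▸ SimpleGraph.dist_le q
  intro i j hij di dj hdi hdj
  obtain ⟨hi, rfl⟩ := List.getElem?_eq_some_iff.mp hdi
  obtain ⟨hj, rfl⟩ := List.getElem?_eq_some_iff.mp hdj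
  exact List.pairwise_iff_getElem.mp hw i j hi hj hij

/-- In a history graph (levels `V n` plus an origin, unique parent of each vertex,
parent maps 1-Lipschitz on levels), in any geodesic all downward vertical edges occur
before all upward vertical edges: there is no upward edge appearing earlier in the
walk than a downward edge. -/
theorem history_graph_geodesic_down_before_up (V : ℕ → Type*)
    (G : SimpleGraph (Unit ⊕ (Σ n : ℕ, V n)))
    (lvl : (Unit ⊕ (Σ n : ℕ, V n)) → ℕ)
    (hlvl : lvl = Sum.elim (fun _ => 0) (fun p => p.1 + 1))
    (hadj : ∀ a b, G.Adj a b → lvl a = lvl b ∨ lvl a + 1 = lvl b ∨ lvl b + 1 = lvl a)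
    (horig : ∀ v : V 0, G.Adj (Sum.inl ()) (Sum.inr ⟨0, v⟩))
    (f : ∀ k : ℕ, V (k + 1) → V k)
    (hvert : ∀ (k : ℕ) (v : V (k + 1)) (u : V k),
      G.Adj (Sum.inr ⟨k + 1, v⟩) (Sum.inr ⟨k, u⟩) ↔ u = f k v)
    (hlip : ∀ (k : ℕ) (u v : V (k + 1)),
      G.Adj (Sum.inr ⟨k + 1, u⟩) (Sum.inr ⟨k + 1, v⟩) →
        f k u = f k v ∨ G.Adj (Sum.inr ⟨k, f k u⟩) (Sum.inr ⟨k, f k v⟩))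
    {a b : Unit ⊕ (Σ n : ℕ, V n)} (w : G.Walk a b)
    (hgeo : w.length = G.dist a b) :
    ∀ i j : ℕ, i < j →
      ∀ di dj : G.Dart, w.darts[i]? = some di → w.darts[j]? = some dj →
        ¬(lvl di.toProd.1 + 1 = lvl di.toProd.2 ∧ lvl dj.toProd.2 + 1 = lvl dj.toProd.1) :=
  history_graph_geodesic_down_before_up_general V G lvl hlvl hadj f hvert hlip w hgeo
end

section
/- Let (V_n) be the levels of a history graph with 1-Lipschitz parent projections f_{m,n} : V_n → V_m for m ≤ n. Suppose there exist positive integers M, j such that whenever x, y ∈ V_{n+j} have finite level-distance and d_n(f_{n,n+j}(x), f_{n,n+j}(y)) = M, then d_{n+j}(x,y) > M. Then for all x, y ∈ V_{n+j} of finite level-distance with d_n(f_{n,n+j}(x), f_{n,n+j}(y)) > M, one has d_{n+j}(x,y) > d_n(f_{n,n+j}(x), f_{n,n+j}(y)). -/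
/-!
Suppose the projected distance `D` of `x, y` equals their level distance. Choose `p` on a
geodesic from `x` to `y` with `d(x, p) = M`. Projecting the broken path `x → p → y` and using
that the projection is 1-Lipschitz, equality `D = d(x, y)` forces the projection to preserve
`d(x, p)` as well, so the projected distance of `x, p` is exactly `M`; the hypothesis then gives
`M < d(x, p) = M`.
-/

open scoped ENNReal

section LipschitzMap

variable {X Y : Type*} {dX : X → X → ℝ≥0∞} {dY : Y → Y → ℝ≥0∞} {g : X → Y}

theorem dist_map_eq_of_between (htri : ∀ a b c : Y, dY a c ≤ dY a b + dY b c)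
    (hlip : ∀ a b : X, dY (g a) (g b) ≤ dX a b) {x y p : X} (hfin : dX x y < ⊤)
    (hxy : dY (g x) (g y) = dX x y) (hp : dX x p + dX p y = dX x y) :
    dY (g x) (g p) = dX x p := by
  have hpy : dX p y ≠ ⊤ := (le_add_self.trans_lt (hp ▸ hfin)).ne
  refine le_antisymm (hlip x p) ((ENNReal.add_le_add_iff_right hpy).mp ?_)
  calc dX x p + dX p y = dY (g x) (g y) := hp.trans hxy.symm
    _ ≤ dY (g x) (g p) + dY (g p) (g y) := htri _ _ _
    _ ≤ dY (g x) (g p) + dX p y := add_le_add_right (hlip p y) _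

theorem dist_map_lt_of_natCast_le (htri : ∀ a b c : Y, dY a c ≤ dY a b + dY b c)
    (hlip : ∀ a b : X, dY (g a) (g b) ≤ dX a b)
    (hgeod : ∀ (x y : X) (m : ℕ), dX x y < ⊤ → (m : ℝ≥0∞) ≤ dX x y →
      ∃ p : X, dX x p = m ∧ dX x p + dX p y = dX x y)
    (M : ℕ) (hM : ∀ x y : X, dX x y < ⊤ → dY (g x) (g y) = M → (M : ℝ≥0∞) < dX x y)
    {x y : X} (hfin : dX x y < ⊤) (hMle : (M : ℝ≥0∞) ≤ dY (g x) (g y)) :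
    dY (g x) (g y) < dX x y := by
  refine (hlip x y).lt_of_ne fun hxy => ?_
  obtain ⟨p, hxp, hp⟩ := hgeod x y M hfin (hMle.trans (hlip x y))
  have hgp : dY (g x) (g p) = M := (dist_map_eq_of_between htri hlip hfin hxy hp).trans hxp
  exact (hM x p (hxp ▸ ENNReal.natCast_lt_top M) hgp).ne hxp.symm

end LipschitzMap

theorem hyperbolicity_bootstrap_general (V : ℕ → Type*)
    (d : ∀ n : ℕ, V n → V n → ℝ≥0∞)
    (htri : ∀ (n : ℕ) (x y z : V n), d n x z ≤ d n x y + d n y z)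
    -- path metric: finite distances are realized by points at any intermediate distance
    (hpath : ∀ (n : ℕ) (x y : V n) (m : ℕ), d n x y < ⊤ → (m : ℝ≥0∞) ≤ d n x y →
      ∃ p : V n, d n x p = m ∧ d n x p + d n p y = d n x y)
    (f : ∀ {m n : ℕ}, m ≤ n → V n → V m)
    (hlip : ∀ {m n : ℕ} (h : m ≤ n) (x y : V n), d m (f h x) (f h y) ≤ d n x y)
    (M j : ℕ)
    (hhyp : ∀ (n : ℕ) (x y : V (n + j)), d (n + j) x y < ⊤ →
      d n (f (Nat.le_add_right n j) x) (f (Nat.le_add_right n j) y) = (M : ℝ≥0∞) →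
      (M : ℝ≥0∞) < d (n + j) x y) :
    ∀ (n : ℕ) (x y : V (n + j)), d (n + j) x y < ⊤ →
      (M : ℝ≥0∞) < d n (f (Nat.le_add_right n j) x) (f (Nat.le_add_right n j) y) →
      d n (f (Nat.le_add_right n j) x) (f (Nat.le_add_right n j) y) < d (n + j) x y :=
  fun n _ _ hfin hMlt =>
    dist_map_lt_of_natCast_le (htri n) (hlip _) (hpath (n + j)) M (hhyp n) hfin hMlt.le

/-- Bootstrapping step for hyperbolic subdivision rules: if whenever two points of
`V (n+j)` at finite level-distance project to points of `V n` at distance exactly `M`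
their level-distance exceeds `M`, then whenever the projected distance is greater than
`M`, the level-distance strictly exceeds the projected distance. -/
theorem hyperbolicity_bootstrap (V : ℕ → Type*)
    (d : ∀ n : ℕ, V n → V n → ℝ≥0∞)
    (hsymm : ∀ (n : ℕ) (x y : V n), d n x y = d n y x)
    (hzero : ∀ (n : ℕ) (x : V n), d n x x = 0)
    (htri : ∀ (n : ℕ) (x y z : V n), d n x z ≤ d n x y + d n y z)
    -- path metric: finite distances are realized by points at any intermediate distance
    (hpath : ∀ (n : ℕ) (x y : V n) (m : ℕ), d n x y < ⊤ → (m : ℝ≥0∞) ≤ d n x y →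
      ∃ p : V n, d n x p = m ∧ d n x p + d n p y = d n x y)
    (f : ∀ {m n : ℕ}, m ≤ n → V n → V m)
    (hcomp : ∀ {m k n : ℕ} (h₁ : m ≤ k) (h₂ : k ≤ n) (x : V n),
      f (h₁.trans h₂) x = f h₁ (f h₂ x))
    (hlip : ∀ {m n : ℕ} (h : m ≤ n) (x y : V n), d m (f h x) (f h y) ≤ d n x y)
    (M j : ℕ) (hM : 0 < M) (hj : 0 < j)
    (hhyp : ∀ (n : ℕ) (x y : V (n + j)), d (n + j) x y < ⊤ →
      d n (f (Nat.le_add_right n j) x) (f (Nat.le_add_right n j) y) = (M : ℝ≥0∞) →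
      (M : ℝ≥0∞) < d (n + j) x y) :
    ∀ (n : ℕ) (x y : V (n + j)), d (n + j) x y < ⊤ →
      (M : ℝ≥0∞) < d n (f (Nat.le_add_right n j) x) (f (Nat.le_add_right n j) y) →
      d n (f (Nat.le_add_right n j) x) (f (Nat.le_add_right n j) y) < d (n + j) x y :=
  hyperbolicity_bootstrap_general V d htri hpath f hlip M j hhyp
end
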